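/- arXiv:1803.05422 — 4 statements merged into one kernel-verified Lean document; each statement's English description precedes it below -/
import Mathlib

section
/- In a generalized group G, for any a ∈ G the fiber e⁻¹(e(a)) = {h ∈ G | e(h) = e(a)} is closed under multiplication: if e(g) = e(a) and e(h) = e(a), then e(g·h) = e(a). -/
/-- A generalized group: a nonempty set with an associative multiplication such that
each element `g` has a unique local identity `e g` with `g * e g = e g * g = g`,
and each element has an inverse relative to its local identity. -/
structure GeneralizedGroup (G : Type*) where
  nonempty : Nonempty G
  mul : G → G → G
  e : G → G
  mul_assoc : ∀ g₁ g₂ g₃ : G, mul (mul g₁ g₂) g₃ = mul g₁ (mul g₂ g₃)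
  mul_e : ∀ g : G, mul g (e g) = g
  e_mul : ∀ g : G, mul (e g) g = g
  e_unique : ∀ g x : G, mul g x = g → mul x g = g → x = e g
  exists_inv : ∀ g : G, ∃ h : G, mul g h = e g ∧ mul h g = e g

/-- In a generalized group, the fiber `e⁻¹(e a)` is closed under multiplication:
if `e g = e a` and `e h = e a` then `e (g * h) = e a`. -/
theorem generalizedGroup_fiber_mul_closed {G : Type*} (GG : GeneralizedGroup G)
    (a g h : G) (hg : GG.e g = GG.e a) (hh : GG.e h = GG.e a) :
    GG.e (GG.mul g h) = GG.e a := by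
  symm
  apply GG.e_unique
  · rw [GG.mul_assoc, ← hh, GG.mul_e]
  · rw [← GG.mul_assoc, ← hg, GG.e_mul]
end

section
/- In a generalized group G, every inverse of an element lies in the same fiber: if h ∈ G and h' ∈ G satisfies h·h' = h'·h = e(h), then e(h') = e(h). -/
/-- In a generalized group, every inverse of an element lies in the same fiber:
if `h * h' = h' * h = e h` then `e h' = e h`. -/
theorem generalizedGroup_inv_mem_fiber {G : Type*} (GG : GeneralizedGroup G)
    (h h' : G) (h1 : GG.mul h h' = GG.e h) (h2 : GG.mul h' h = GG.e h) :
    GG.e h' = GG.e h := by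
  -- e(h) * e(h') = e(h)
  have hA : GG.mul (GG.e h) (GG.e h') = GG.e h := by
    calc GG.mul (GG.e h) (GG.e h') = GG.mul (GG.mul h h') (GG.e h') := by rw [h1]
      _ = GG.mul h (GG.mul h' (GG.e h')) := GG.mul_assoc _ _ _
      _ = GG.mul h h' := by rw [GG.mul_e]
      _ = GG.e h := h1
  -- e(h') * e(h) = e(h)
  have hB : GG.mul (GG.e h') (GG.e h) = GG.e h := by
    calc GG.mul (GG.e h') (GG.e h) = GG.mul (GG.e h') (GG.mul h' h) := by rw [h2]
      _ = GG.mul (GG.mul (GG.e h') h') h := (GG.mul_assoc _ _ _).symm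
      _ = GG.mul h' h := by rw [GG.e_mul]
      _ = GG.e h := h2
  -- e(h) is idempotent, so e(e(h)) = e(h)
  have hidem : GG.mul (GG.e h) (GG.e h) = GG.e h := by
    calc GG.mul (GG.e h) (GG.e h) = GG.mul (GG.mul h h') (GG.e h) := by rw [h1]
      _ = GG.mul h (GG.mul h' (GG.e h)) := GG.mul_assoc _ _ _
      _ = GG.mul h (GG.mul h' (GG.mul h h')) := by rw [h1]
      _ = GG.mul h (GG.mul (GG.mul h' h) h') := by rw [GG.mul_assoc]
      _ = GG.mul h (GG.mul (GG.e h) h') := by rw [h2]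
      _ = GG.mul h (GG.mul (GG.mul h h') h') := by rw [h1]
      _ = GG.mul (GG.mul h (GG.mul h h')) h' := (GG.mul_assoc _ _ _).symm
      _ = GG.mul (GG.mul h (GG.e h)) h' := by rw [h1]
      _ = GG.mul h h' := by rw [GG.mul_e]
      _ = GG.e h := h1
  have h3 : GG.e h' = GG.e (GG.e h) := GG.e_unique _ _ hA hB
  have h4 : GG.e h = GG.e (GG.e h) := GG.e_unique _ _ hidem hidem
  rw [h3, ← h4]
end

section
/- In a generalized group G, for every a ∈ G the fiber e⁻¹(e(a)) = {h ∈ G | e(h) = e(a)} carries a canonical group structure: it is closed under the multiplication of G, the restricted multiplication is associative, the element e(a) belongs to e⁻¹(e(a)) and is a two-sided identity for it, and every element of e⁻¹(e(a)) has a two-sided inverse lying in e⁻¹(e(a)). -/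
/-- In a generalized group, each fiber `e⁻¹(e a)` carries a canonical group structure:
it is closed under multiplication, the restricted multiplication is associative,
`e a` belongs to the fiber and is a two-sided identity for it, and every element of the
fiber has a two-sided inverse lying in the fiber. -/
theorem generalizedGroup_fiber_group {G : Type*} (GG : GeneralizedGroup G) (a : G) :
    (∀ g h : G, GG.e g = GG.e a → GG.e h = GG.e a → GG.e (GG.mul g h) = GG.e a) ∧
    (∀ g h k : G, GG.e g = GG.e a → GG.e h = GG.e a → GG.e k = GG.e a →
      GG.mul (GG.mul g h) k = GG.mul g (GG.mul h k)) ∧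
    GG.e (GG.e a) = GG.e a ∧
    (∀ h : G, GG.e h = GG.e a → GG.mul h (GG.e a) = h ∧ GG.mul (GG.e a) h = h) ∧
    (∀ h : G, GG.e h = GG.e a → ∃ h' : G, GG.e h' = GG.e a ∧
      GG.mul h h' = GG.e a ∧ GG.mul h' h = GG.e a) := by

  have idem : ∀ g : G, GG.mul (GG.e g) (GG.e g) = GG.e g := by
    intro g
    obtain ⟨h, h1, h2⟩ := GG.exists_inv g
    calc GG.mul (GG.e g) (GG.e g) = GG.mul (GG.mul h g) (GG.e g) := by rw [h2]
      _ = GG.mul h (GG.mul g (GG.e g)) := GG.mul_assoc _ _ _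
      _ = GG.mul h g := by rw [GG.mul_e]
      _ = GG.e g := h2
  refine ⟨?_, ?_, ?_, ?_, ?_⟩
  · intro g h hg hh
    refine (GG.e_unique (GG.mul g h) (GG.e a) ?_ ?_).symm
    · rw [GG.mul_assoc, ← hh, GG.mul_e]
    · rw [← GG.mul_assoc, ← hg, GG.e_mul]
  · intro g h k _ _ _
    exact GG.mul_assoc g h k
  · exact (GG.e_unique (GG.e a) (GG.e a) (idem a) (idem a)).symm
  · intro h hh
    constructor
    · rw [← hh, GG.mul_e]
    · rw [← hh, GG.e_mul]
  · intro h hh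
    obtain ⟨h', h1, h2⟩ := GG.exists_inv h
    refine ⟨GG.mul (GG.e a) h', ?_, ?_, ?_⟩
    · -- e (e a * h') = e a
      have comm : GG.mul h' (GG.e a) = GG.mul (GG.e a) h' := by
        calc GG.mul h' (GG.e a) = GG.mul h' (GG.mul h h') := by rw [h1, hh]
          _ = GG.mul (GG.mul h' h) h' := (GG.mul_assoc _ _ _).symm
          _ = GG.mul (GG.e a) h' := by rw [h2, hh]
      refine (GG.e_unique (GG.mul (GG.e a) h') (GG.e a) ?_ ?_).symm
      · calc GG.mul (GG.mul (GG.e a) h') (GG.e a)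
            = GG.mul (GG.e a) (GG.mul h' (GG.e a)) := GG.mul_assoc _ _ _
          _ = GG.mul (GG.e a) (GG.mul (GG.e a) h') := by rw [comm]
          _ = GG.mul (GG.mul (GG.e a) (GG.e a)) h' := (GG.mul_assoc _ _ _).symm
          _ = GG.mul (GG.e a) h' := by rw [idem]
      · calc GG.mul (GG.e a) (GG.mul (GG.e a) h')
            = GG.mul (GG.mul (GG.e a) (GG.e a)) h' := (GG.mul_assoc _ _ _).symm
          _ = GG.mul (GG.e a) h' := by rw [idem]
    · calc GG.mul h (GG.mul (GG.e a) h')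
          = GG.mul (GG.mul h (GG.e a)) h' := (GG.mul_assoc _ _ _).symm
        _ = GG.mul h h' := by rw [← hh, GG.mul_e]
        _ = GG.e a := by rw [h1, hh]
    · calc GG.mul (GG.mul (GG.e a) h') h
          = GG.mul (GG.e a) (GG.mul h' h) := GG.mul_assoc _ _ _
        _ = GG.mul (GG.e a) (GG.e a) := by rw [h2, hh]
        _ = GG.e a := idem a
end

section
/- Let T be a generalized group, t ∈ T, and let t⁻¹ ∈ T satisfy t·t⁻¹ = t⁻¹·t = e(t). Then the adjoint map Ad_t(s) = t·s·t⁻¹ maps the fiber e⁻¹(e(t)) = {s ∈ T | e(s) = e(t)} into itself, is multiplicative on this fiber (Ad_t(s₁·s₂) = Ad_t(s₁)·Ad_t(s₂) for all s₁, s₂ in the fiber), fixes e(t), and is a bijection of the fiber onto itself with inverse Ad_{t⁻¹}. -/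
/-- For `t` in a generalized group `T` with chosen inverse `t⁻¹`
(`t * t⁻¹ = t⁻¹ * t = e t`), the adjoint map `Ad_t(s) = t * s * t⁻¹` maps the fiber
`e⁻¹(e t)` into itself, is multiplicative on this fiber, fixes `e t`, and is a bijection
of the fiber onto itself with inverse `Ad_{t⁻¹}(s) = t⁻¹ * s * t`. -/
theorem generalizedGroup_adjoint_action {T : Type*} (GG : GeneralizedGroup T)
    (t tinv : T) (h1 : GG.mul t tinv = GG.e t) (h2 : GG.mul tinv t = GG.e t) :
    (∀ s : T, GG.e s = GG.e t → GG.e (GG.mul (GG.mul t s) tinv) = GG.e t) ∧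
    (∀ s₁ s₂ : T, GG.e s₁ = GG.e t → GG.e s₂ = GG.e t →
      GG.mul (GG.mul t (GG.mul s₁ s₂)) tinv =
        GG.mul (GG.mul (GG.mul t s₁) tinv) (GG.mul (GG.mul t s₂) tinv)) ∧
    GG.mul (GG.mul t (GG.e t)) tinv = GG.e t ∧
    (∀ s : T, GG.e s = GG.e t →
      GG.mul (GG.mul tinv (GG.mul (GG.mul t s) tinv)) t = s ∧
      GG.mul (GG.mul t (GG.mul (GG.mul tinv s) t)) tinv = s) := by
  have hεε : GG.mul (GG.e t) (GG.e t) = GG.e t := by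
    nth_rewrite 2 [← h1]
    rw [← GG.mul_assoc, GG.e_mul, h1]
  have heε : GG.e (GG.e t) = GG.e t := (GG.e_unique _ _ hεε hεε).symm
  have hf : GG.e tinv = GG.e t := by
    have h3 : GG.mul (GG.e t) (GG.e tinv) = GG.e t := by
      rw [← h1, GG.mul_assoc, GG.mul_e]
    have h4 : GG.mul (GG.e tinv) (GG.e t) = GG.e t := by
      rw [← h2, ← GG.mul_assoc, GG.e_mul]
    exact (GG.e_unique _ _ h3 h4).trans heε
  have hti : GG.mul tinv (GG.e t) = tinv := by rw [← hf]; exact GG.mul_e tinv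
  have hit : GG.mul (GG.e t) tinv = tinv := by rw [← hf]; exact GG.e_mul tinv
  have hsε : ∀ s : T, GG.e s = GG.e t → GG.mul s (GG.e t) = s := by
    intro s hs; rw [← hs]; exact GG.mul_e s
  have hεs : ∀ s : T, GG.e s = GG.e t → GG.mul (GG.e t) s = s := by
    intro s hs; rw [← hs]; exact GG.e_mul s
  refine ⟨?_, ?_, ?_, ?_⟩
  · intro s hs
    have hl : GG.mul (GG.mul (GG.mul t s) tinv) (GG.e t) = GG.mul (GG.mul t s) tinv := by
      rw [GG.mul_assoc, hti]
    have hr : GG.mul (GG.e t) (GG.mul (GG.mul t s) tinv) = GG.mul (GG.mul t s) tinv := by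
      rw [← GG.mul_assoc, ← GG.mul_assoc, GG.e_mul]
    exact (GG.e_unique _ _ hl hr).symm
  · intro s₁ s₂ hs₁ hs₂
    conv_rhs => rw [GG.mul_assoc (GG.mul t s₁), ← GG.mul_assoc tinv, ← GG.mul_assoc tinv,
      h2, hεs s₂ hs₂]
    simp only [GG.mul_assoc]
  · rw [GG.mul_e, h1]
  · intro s hs
    constructor
    · rw [← GG.mul_assoc tinv, ← GG.mul_assoc tinv, h2, hεs s hs, GG.mul_assoc, h2, hsε s hs]
    · rw [← GG.mul_assoc t, ← GG.mul_assoc t, h1, hεs s hs, GG.mul_assoc, h1, hsε s hs]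
end
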